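/- arXiv:0909.3134 — 4 statements merged into one kernel-verified Lean document; each statement's English description precedes it below -/
import Mathlib

section
/- (Lemma 4.4(2), osp(2m+1|2)) Suppose λ ∈ 𝒫 is atypical and μ, ν ∈ 𝒫_λ with μ ≠ ν. Then μ and ν are not block equivalent: ¬(μ ∼ ν). -/
open Finset
open Fin.NatCast

/-- The standard basis vector `ε_i` of `ℚ^{1+m}` (with `ε_0 = δ`). -/
noncomputable def eps (m i : ℕ) : Fin (m+1) → ℚ := Pi.single (i : Fin (m+1)) 1

/-- The bilinear form `⟨λ, μ⟩ = −λ₀μ₀ + Σ_{i=1}^m λ_i μ_i` on `ℚ^{1+m}`. -/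
noncomputable def form (m : ℕ) (l μ : Fin (m+1) → ℚ) : ℚ :=
  -(l 0 * μ 0) + ∑ i : Fin (m+1), (if i = 0 then 0 else l i * μ i)

/-- `ρ` for `osp(2m|2)`: `ρ₀ = 1−m`, `ρ_i = m−i`. -/
noncomputable def rhoD (m : ℕ) : Fin (m+1) → ℚ :=
  fun i => if i = 0 then 1 - (m : ℚ) else (m : ℚ) - (i : ℕ)

/-- `ρ` for `osp(2m+1|2)`: `ρ₀ = 1/2−m`, `ρ_i = m−i+1/2`. -/
noncomputable def rhoB (m : ℕ) : Fin (m+1) → ℚ :=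
  fun i => if i = 0 then 1/2 - (m : ℚ) else (m : ℚ) - (i : ℕ) + 1/2

/-- All coordinates are integers. -/
def IsIntegralWt (m : ℕ) (l : Fin (m+1) → ℚ) : Prop := ∀ i, ∃ z : ℤ, l i = z

/-- Dominant integral weights for `osp(2m|2)`. -/
def PD (m : ℕ) (l : Fin (m+1) → ℚ) : Prop :=
  IsIntegralWt m l ∧ 0 ≤ l 0 ∧
  (∀ i j : ℕ, 1 ≤ i → i ≤ j → j ≤ m - 1 → l (j : Fin (m+1)) ≤ l (i : Fin (m+1))) ∧
  |l (m : Fin (m+1))| ≤ l ((m - 1 : ℕ) : Fin (m+1)) ∧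
  (∀ i : ℕ, 1 ≤ i → i ≤ m - 1 → 0 ≤ l (i : Fin (m+1))) ∧
  (∀ i : ℕ, 1 ≤ i → i ≤ m → l 0 < (i : ℚ) → l (i : Fin (m+1)) = 0)

/-- Dominant integral weights for `osp(2m+1|2)`. -/
def PB (m : ℕ) (l : Fin (m+1) → ℚ) : Prop :=
  IsIntegralWt m l ∧ 0 ≤ l 0 ∧
  (∀ i j : ℕ, 1 ≤ i → i ≤ j → j ≤ m → l (j : Fin (m+1)) ≤ l (i : Fin (m+1))) ∧
  (∀ i : ℕ, 1 ≤ i → i ≤ m → 0 ≤ l (i : Fin (m+1))) ∧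
  (∀ i : ℕ, 1 ≤ i → i ≤ m → l 0 < (i : ℚ) → l (i : Fin (m+1)) = 0)

/-- `λ` is atypical (w.r.t. a given `ρ`): `⟨λ+ρ, δ+s·ε_i⟩ = 0` for some `1 ≤ i ≤ m`, `s = ±1`. -/
def Atyp (m : ℕ) (ρ l : Fin (m+1) → ℚ) : Prop :=
  ∃ i : ℕ, 1 ≤ i ∧ i ≤ m ∧ ∃ s : ℚ, (s = 1 ∨ s = -1) ∧
    form m (l + ρ) (eps m 0 + s • eps m i) = 0

abbrev GLQ (m : ℕ) := (Fin (m+1) → ℚ) ≃ₗ[ℚ] (Fin (m+1) → ℚ)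

/-- Permutations of the coordinates `1, …, m` (fixing coordinate `0`). -/
def permSet (m : ℕ) : Set (GLQ m) :=
  {w | ∃ σ : Equiv.Perm (Fin (m+1)), σ 0 = 0 ∧ ∀ v, w v = v ∘ σ}

/-- The sign change of coordinate `0`. -/
def flip0Set (m : ℕ) : Set (GLQ m) :=
  {w | ∀ v k, w v k = if k = 0 then -(v k) else v k}

/-- Simultaneous sign changes of two coordinates among `1, …, m`. -/
def doubleFlipSet (m : ℕ) : Set (GLQ m) :=
  {w | ∃ i j : Fin (m+1), i ≠ 0 ∧ j ≠ 0 ∧ i ≠ j ∧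
    ∀ v k, w v k = if k = i ∨ k = j then -(v k) else v k}

/-- Sign changes of a single coordinate among `1, …, m`. -/
def singleFlipSet (m : ℕ) : Set (GLQ m) :=
  {w | ∃ i : Fin (m+1), i ≠ 0 ∧ ∀ v k, w v k = if k = i then -(v k) else v k}

/-- The Weyl group for `osp(2m|2)`. -/
def WD (m : ℕ) : Subgroup (GLQ m) :=
  Subgroup.closure (permSet m ∪ doubleFlipSet m ∪ flip0Set m)

/-- The Weyl group for `osp(2m+1|2)`. -/
def WB (m : ℕ) : Subgroup (GLQ m) :=
  Subgroup.closure (permSet m ∪ singleFlipSet m ∪ flip0Set m)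

/-- The block equivalence: the smallest equivalence relation with
`μ ∼ μ+α` for odd roots `α = ±(δ±ε_i)` with `⟨μ+ρ, α⟩ = 0`, and
`μ ∼ w(μ+ρ)−ρ` for `w ∈ W`. -/
def blockRel (m : ℕ) (ρ : Fin (m+1) → ℚ) (W : Subgroup (GLQ m)) :
    (Fin (m+1) → ℚ) → (Fin (m+1) → ℚ) → Prop :=
  Relation.EqvGen (fun μ ν =>
    (∃ i : ℕ, 1 ≤ i ∧ i ≤ m ∧ ∃ s t : ℚ, (s = 1 ∨ s = -1) ∧ (t = 1 ∨ t = -1) ∧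
      form m (μ + ρ) (t • (eps m 0 + s • eps m i)) = 0 ∧
      ν = μ + t • (eps m 0 + s • eps m i)) ∨
    (∃ w ∈ W, ν = w (μ + ρ) - ρ))

def blockD (m : ℕ) : (Fin (m+1) → ℚ) → (Fin (m+1) → ℚ) → Prop :=
  blockRel m (rhoD m) (WD m)

def blockB (m : ℕ) : (Fin (m+1) → ℚ) → (Fin (m+1) → ℚ) → Prop :=
  blockRel m (rhoB m) (WB m)

/-- The set `𝒫_λ = 𝒫_{λ+} ∪ 𝒫_{λ−}` for `osp(2m|2)`. -/
noncomputable def PlamD (m : ℕ) (l : Fin (m+1) → ℚ) : Set (Fin (m+1) → ℚ) :=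
  {μ | PD m μ ∧
    (μ = l + eps m 0 ∨ μ = l - eps m 0 ∨
     (∃ i : ℕ, 1 ≤ i ∧ i ≤ m - 1 ∧ (μ = l + eps m i ∨ μ = l - eps m i)) ∨
     (0 ≤ l (m : Fin (m+1)) ∧ μ = l + eps m m) ∨
     (l (m : Fin (m+1)) ≤ 0 ∧ μ = l - eps m m) ∨
     (l (m : Fin (m+1)) < 0 ∧ μ = l + eps m m) ∨
     (0 < l (m : Fin (m+1)) ∧ μ = l - eps m m))}

/-- The set `𝒫_λ = 𝒫_{λ+} ∪ 𝒫_{λ−}` for `osp(2m+1|2)`. -/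
noncomputable def PlamB (m : ℕ) (l : Fin (m+1) → ℚ) : Set (Fin (m+1) → ℚ) :=
  {μ | PB m μ ∧
    ((∃ i : ℕ, i ≤ m ∧ (μ = l + eps m i ∨ μ = l - eps m i)) ∨
     (l (m : Fin (m+1)) ≠ 0 ∧ μ = l))}

/-- The weight `λ^{j,q}`. -/
noncomputable def lamJQ (m : ℕ) (l : Fin (m+1) → ℚ) (l0 j : ℕ) (q : ℤ) : Fin (m+1) → ℚ :=
  ((j : ℚ) - (q : ℚ)) • eps m 0 + (∑ i ∈ Finset.Icc 1 j, l (i : Fin (m+1)) • eps m i) +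
    (q : ℚ) • eps m (j + 1) +
    ∑ i ∈ Finset.Icc (j+1) l0, (l (i : Fin (m+1)) + 1) • eps m (i+1)

/-- The weight `λ^{j,q}_−`. -/
noncomputable def lamJQm (m : ℕ) (l : Fin (m+1) → ℚ) (l0 j : ℕ) (q : ℤ) : Fin (m+1) → ℚ :=
  ((j : ℚ) - (q : ℚ)) • eps m 0 + (∑ i ∈ Finset.Icc 1 j, l (i : Fin (m+1)) • eps m i) +
    (q : ℚ) • eps m (j + 1) +
    (∑ i ∈ Finset.Icc (j+1) (l0 - 1), (l (i : Fin (m+1)) + 1) • eps m (i+1)) -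
    (l (l0 : Fin (m+1)) + 1) • eps m (l0 + 1)

/-- `λ^δ` for `osp(2m|2)`: coordinate `0` becomes `2m−2−λ₀`. -/
noncomputable def deltaD (m : ℕ) (l : Fin (m+1) → ℚ) : Fin (m+1) → ℚ :=
  fun i => if i = 0 then 2*(m : ℚ) - 2 - l 0 else l i

/-- `λ^δ` for `osp(2m+1|2)`: coordinate `0` becomes `2m−1−λ₀`. -/
noncomputable def deltaB (m : ℕ) (l : Fin (m+1) → ℚ) : Fin (m+1) → ℚ :=
  fun i => if i = 0 then 2*(m : ℚ) - 1 - l 0 else l i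

/-
Write `x = μ + ρ`. The signed multiset `{|x₁|, …, |x_m|} - {|x₀|}`, encoded as a finitely
supported function `ℚ →₀ ℤ`, is a block invariant: `W` only permutes the coordinates of `x` and
changes their signs, and an odd reflection along `δ ± εᵢ` with `⟨x, δ ± εᵢ⟩ = 0` moves `|x₀|`
and `|xᵢ|` to the same new value, so the two changes cancel.

For dominant `λ` the entries `|xᵢ|` (`i ≥ 1`) are distinct positive half-integers, `x₀ ≠ 0`, and
atypicality says that `|x₀|` is one of the `|xᵢ|`. Each element of `𝒫_λ` other than `λ` changes
exactly one coordinate of `x` by `±1`, which replaces a single value of the signed multiset by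
another one; distinctness of the `|xᵢ|`, `x₀ ≠ 0` and atypicality rule out any coincidence
between the resulting invariants.
-/

theorem abs_ite_neg {α : Type*} [AddCommGroup α] [LinearOrder α] [IsOrderedAddMonoid α]
    (p : Prop) [Decidable p] (a : α) : |if p then -a else a| = |a| := by
  split_ifs <;> simp

theorem single_one_sub_single_one_eq_iff {α : Type*} {a b a' b' : α} :
    Finsupp.single a (1 : ℤ) - Finsupp.single b 1 = Finsupp.single a' 1 - Finsupp.single b' 1 ↔
      (a = a' ∧ b = b') ∨ (a = b ∧ a' = b') := by
  simp only [sub_eq_add_neg, ← Finsupp.single_neg]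
  rw [Finsupp.single_add_single_eq_single_add_single one_ne_zero (by norm_num)]
  norm_num

def coordSign {m : ℕ} (k : Fin (m+1)) : ℤ := if k = 0 then -1 else 1

noncomputable def signedAbsCount {m : ℕ} (x : Fin (m+1) → ℚ) : ℚ →₀ ℤ :=
  ∑ k, Finsupp.single |x k| (coordSign k)

noncomputable def blockInv (m : ℕ) (μ : Fin (m+1) → ℚ) : ℚ →₀ ℤ :=
  signedAbsCount (μ + rhoB m)

section
variable {m : ℕ}

theorem coordSign_zero : coordSign (0 : Fin (m+1)) = -1 := if_pos rfl

theorem coordSign_of_ne_zero {k : Fin (m+1)} (hk : k ≠ 0) : coordSign k = 1 := if_neg hk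

theorem coordSign_ne_zero (k : Fin (m+1)) : coordSign k ≠ 0 := by
  unfold coordSign; split_ifs <;> norm_num

theorem signedAbsCount_add_single (x : Fin (m+1) → ℚ) (k : Fin (m+1)) (e : ℚ) :
    signedAbsCount (x + e • Pi.single k 1) = signedAbsCount x +
      (Finsupp.single |x k + e| (coordSign k) - Finsupp.single |x k| (coordSign k)) := by
  have hrest : ∑ i ∈ {k}ᶜ, Finsupp.single |(x + e • Pi.single k 1 : Fin (m+1) → ℚ) i|
      (coordSign i) = ∑ i ∈ {k}ᶜ, Finsupp.single |x i| (coordSign i) :=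
    Finset.sum_congr rfl fun i hi => by
      simp [Finset.notMem_singleton.1 (Finset.mem_compl.1 hi)]
  unfold signedAbsCount
  rw [Fintype.sum_eq_add_sum_compl k, Fintype.sum_eq_add_sum_compl k, hrest]
  simp only [Pi.add_apply, Pi.smul_apply, Pi.single_eq_same, smul_eq_mul, mul_one]
  abel

theorem signedAbsCount_congr_abs {x y : Fin (m+1) → ℚ} (h : ∀ k, |x k| = |y k|) :
    signedAbsCount x = signedAbsCount y := by
  simp only [signedAbsCount, h]

theorem signedAbsCount_comp_perm (x : Fin (m+1) → ℚ) {σ : Equiv.Perm (Fin (m+1))}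
    (hσ : σ 0 = 0) : signedAbsCount (x ∘ σ) = signedAbsCount x := by
  have hsign : ∀ k, coordSign (σ k) = coordSign k := fun k => by
    simp only [coordSign, σ.injective.eq_iff' hσ]
  unfold signedAbsCount
  rw [← Equiv.sum_comp σ (fun k => Finsupp.single |x k| (coordSign k))]
  simp only [Function.comp_apply, hsign]

theorem signedAbsCount_map_of_mem_WB {w : GLQ m} (hw : w ∈ WB m) (x : Fin (m+1) → ℚ) :
    signedAbsCount (w x) = signedAbsCount x := by
  induction hw using Subgroup.closure_induction generalizing x with
  | mem g hg =>
    rcases hg with (⟨σ, hσ, hg⟩ | ⟨i, -, hg⟩) | hg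
    · rw [hg, signedAbsCount_comp_perm x hσ]
    · exact signedAbsCount_congr_abs fun k => by rw [hg, abs_ite_neg]
    · exact signedAbsCount_congr_abs fun k => by rw [hg, abs_ite_neg]
  | one => rfl
  | mul a b _ _ ha hb => exact (ha (b x)).trans (hb x)
  | inv a _ ha => simpa using (ha (a⁻¹ x)).symm

theorem signedAbsCount_add_oddRoot (x : Fin (m+1) → ℚ) {i : Fin (m+1)} (hi : i ≠ 0)
    {s : ℚ} (hs : |s| = 1) (horth : -x 0 + s * x i = 0) (t : ℚ) :
    signedAbsCount (x + t • (Pi.single 0 1 + s • Pi.single i 1)) = signedAbsCount x := by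
  have hxi : x i = s * x 0 := by
    have hss : s * s = 1 := by rw [← abs_mul_abs_self, hs, one_mul]
    linear_combination s * horth - x i * hss
  have hshift : x + t • (Pi.single 0 1 + s • Pi.single i 1) =
      (x + t • Pi.single 0 1) + (t * s) • Pi.single i 1 := by
    rw [smul_add, smul_smul, add_assoc]
  have habs : ∀ z, |s * z| = |z| := fun z => by rw [abs_mul, hs, one_mul]
  rw [hshift, signedAbsCount_add_single, signedAbsCount_add_single]
  simp only [Pi.add_apply, Pi.smul_apply, Pi.single_eq_of_ne hi,
    smul_eq_mul, mul_zero, add_zero, hxi, coordSign_zero, coordSign_of_ne_zero hi,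
    Finsupp.single_neg]
  rw [show s * x 0 + t * s = s * (x 0 + t) by ring, habs, habs]
  abel

theorem Fin.natCast_ne_zero_of_pos_of_le {i : ℕ} (hi : 1 ≤ i) (him : i ≤ m) :
    (i : Fin (m+1)) ≠ 0 := by
  rw [Ne, Fin.natCast_eq_zero]
  exact Nat.not_dvd_of_pos_of_lt hi (by omega)

theorem form_smul_right (x y : Fin (m+1) → ℚ) (t : ℚ) :
    form m x (t • y) = t * form m x y := by
  unfold form
  rw [mul_add, Finset.mul_sum]
  congr 1
  · simp only [Pi.smul_apply, smul_eq_mul]; ring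
  · refine Finset.sum_congr rfl fun k _ => ?_
    simp only [Pi.smul_apply, smul_eq_mul]
    split_ifs <;> ring

theorem form_eps_zero_add_smul_eps (x : Fin (m+1) → ℚ) {i : ℕ} (hi : 1 ≤ i) (him : i ≤ m)
    (s : ℚ) : form m x (eps m 0 + s • eps m i) = -x 0 + s * x i := by
  have hi0 := Fin.natCast_ne_zero_of_pos_of_le (m := m) hi him
  simp only [form, eps, Pi.add_apply, Pi.smul_apply, Pi.single_apply, Nat.cast_zero, smul_eq_mul]
  rw [Finset.sum_eq_single (i : Fin (m+1)) (fun k _ hk => by split_ifs <;> simp_all)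
    (by simp)]
  simp [hi0, hi0.symm]
  ring

theorem form_oddRoot (x : Fin (m+1) → ℚ) {i : ℕ} (hi : 1 ≤ i) (him : i ≤ m) (s t : ℚ) :
    form m x (t • (eps m 0 + s • eps m i)) = t * (-x 0 + s * x i) := by
  rw [form_smul_right, form_eps_zero_add_smul_eps x hi him]

theorem blockInv_eq_of_blockB {μ ν : Fin (m+1) → ℚ} (h : blockB m μ ν) :
    blockInv m μ = blockInv m ν := by
  induction h with
  | rel μ ν hμν =>
    rcases hμν with ⟨i, hi, him, s, t, hs, ht, horth, rfl⟩ | ⟨w, hw, rfl⟩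
    · have ht0 : t ≠ 0 := by rcases ht with rfl | rfl <;> norm_num
      rw [form_oddRoot _ hi him, mul_eq_zero, or_iff_right ht0] at horth
      rw [blockInv, blockInv, add_right_comm, eps, eps, Nat.cast_zero,
        signedAbsCount_add_oddRoot _ (Fin.natCast_ne_zero_of_pos_of_le hi him)
          ((abs_eq zero_le_one).2 hs) horth]
    · rw [blockInv, blockInv, sub_add_cancel, signedAbsCount_map_of_mem_WB hw]
  | refl => rfl
  | symm _ _ _ ih => exact ih.symm
  | trans _ _ _ _ _ ih₁ ih₂ => exact ih₁.trans ih₂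

theorem Atyp.exists_abs_eq {ρ l : Fin (m+1) → ℚ} (hA : Atyp m ρ l) :
    ∃ k ≠ 0, |(l + ρ) k| = |(l + ρ) 0| := by
  obtain ⟨i, hi, him, s, hs, horth⟩ := hA
  refine ⟨i, Fin.natCast_ne_zero_of_pos_of_le hi him, ?_⟩
  rw [form_eps_zero_add_smul_eps _ hi him] at horth
  rcases hs with rfl | rfl
  · rw [show (l + ρ) i = (l + ρ) 0 by linarith]
  · rw [show (l + ρ) i = -(l + ρ) 0 by linarith, abs_neg]

end

section
variable {m : ℕ} {η : Fin (m+1) → ℚ}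

theorem rhoB_of_ne_zero {k : Fin (m+1)} (hk : k ≠ 0) : rhoB m k = m - (k : ℕ) + 1/2 :=
  if_neg hk

theorem PB.antitone_of_ne_zero (hη : PB m η) {k k' : Fin (m+1)} (hk : k ≠ 0) (hkk' : k ≤ k') :
    η k' ≤ η k := by
  simpa using hη.2.2.1 k k' (Fin.pos_of_ne_zero hk) hkk' (Nat.lt_succ_iff.1 k'.isLt)

theorem PB.nonneg_of_ne_zero (hη : PB m η) {k : Fin (m+1)} (hk : k ≠ 0) : 0 ≤ η k := by
  simpa using hη.2.2.2.1 k (Fin.pos_of_ne_zero hk) (Nat.lt_succ_iff.1 k.isLt)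

theorem PB.add_rhoB_pos (hη : PB m η) {k : Fin (m+1)} (hk : k ≠ 0) : 0 < (η + rhoB m) k := by
  have hkm : ((k : ℕ) : ℚ) ≤ m := by exact_mod_cast Nat.lt_succ_iff.1 k.isLt
  rw [Pi.add_apply, rhoB_of_ne_zero hk]
  linarith [hη.nonneg_of_ne_zero hk]

theorem PB.add_rhoB_lt (hη : PB m η) {k k' : Fin (m+1)} (hk : k ≠ 0) (hkk' : k < k') :
    (η + rhoB m) k' < (η + rhoB m) k := by
  have hk' : k' ≠ 0 := ((Fin.pos_of_ne_zero hk).trans hkk').ne'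
  have hval : ((k : ℕ) : ℚ) < (k' : ℕ) := by exact_mod_cast hkk'
  rw [Pi.add_apply, Pi.add_apply, rhoB_of_ne_zero hk, rhoB_of_ne_zero hk']
  linarith [hη.antitone_of_ne_zero hk hkk'.le]

theorem PB.abs_add_rhoB_inj (hη : PB m η) {k k' : Fin (m+1)} (hk : k ≠ 0) (hk' : k' ≠ 0)
    (h : |(η + rhoB m) k| = |(η + rhoB m) k'|) : k = k' := by
  rw [abs_of_pos (hη.add_rhoB_pos hk), abs_of_pos (hη.add_rhoB_pos hk')] at h
  rcases lt_trichotomy k k' with hlt | rfl | hgt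
  · exact absurd h (hη.add_rhoB_lt hk hlt).ne'
  · rfl
  · exact absurd h (hη.add_rhoB_lt hk' hgt).ne

theorem PB.add_rhoB_zero_ne_zero (hη : PB m η) : (η + rhoB m) 0 ≠ 0 := by
  obtain ⟨z, hz⟩ := hη.1 0
  rw [Pi.add_apply, hz, rhoB, if_pos rfl]
  intro h
  have h2 : ((2 * z : ℤ) : ℚ) = ((2 * m - 1 : ℤ) : ℚ) := by push_cast; linarith
  have := Int.cast_injective h2
  omega

theorem PB.three_halves_le_add_rhoB (hη : PB m η) (hlast : η (Fin.last m) ≠ 0)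
    {k : Fin (m+1)} (hk : k ≠ 0) : 3/2 ≤ (η + rhoB m) k := by
  have hlast1 : 1 ≤ η (Fin.last m) := by
    have hlast0 : Fin.last m ≠ 0 := ((Fin.pos_of_ne_zero hk).trans_le (Fin.le_last k)).ne'
    obtain ⟨z, hz⟩ := hη.1 (Fin.last m)
    have hz0 := hη.nonneg_of_ne_zero hlast0
    rw [hz] at hlast hz0 ⊢
    have : z ≠ 0 := by exact_mod_cast hlast
    have : 0 ≤ z := by exact_mod_cast hz0
    exact_mod_cast (show (1 : ℤ) ≤ z by omega)
  have hkm : ((k : ℕ) : ℚ) ≤ m := by exact_mod_cast Nat.lt_succ_iff.1 k.isLt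
  rw [Pi.add_apply, rhoB_of_ne_zero hk]
  linarith [hη.antitone_of_ne_zero hk (Fin.le_last k)]

end

section
variable {m : ℕ} {l : Fin (m+1) → ℚ} {k k' : Fin (m+1)} {e e' : ℚ}

theorem add_single_add_rhoB_apply_self (η : Fin (m+1) → ℚ) (k : Fin (m+1)) (e : ℚ) :
    (η + e • Pi.single k 1 + rhoB m : Fin (m+1) → ℚ) k = (η + rhoB m) k + e := by
  simp only [Pi.add_apply, Pi.smul_apply, Pi.single_eq_same, smul_eq_mul, mul_one]
  ring

theorem add_single_add_rhoB_apply_of_ne (η : Fin (m+1) → ℚ) {j k : Fin (m+1)} (hjk : j ≠ k)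
    (e : ℚ) : (η + e • Pi.single k 1 + rhoB m : Fin (m+1) → ℚ) j = (η + rhoB m) j := by
  simp [Pi.single_eq_of_ne hjk]

theorem blockInv_add_single (η : Fin (m+1) → ℚ) (k : Fin (m+1)) (e : ℚ) :
    blockInv m (η + e • Pi.single k 1) = blockInv m η +
      (Finsupp.single |(η + rhoB m) k + e| (coordSign k) -
        Finsupp.single |(η + rhoB m) k| (coordSign k)) := by
  rw [blockInv, add_right_comm, signedAbsCount_add_single, blockInv]

theorem PB.abs_add_rhoB_add_ne (hl : PB m l) (hμ : PB m (l + e • Pi.single k 1)) (hk : k ≠ 0)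
    (he : e ≠ 0) : |(l + rhoB m) k + e| ≠ |(l + rhoB m) k| := by
  have hpos := hμ.add_rhoB_pos hk
  rw [add_single_add_rhoB_apply_self] at hpos
  rw [abs_of_pos hpos, abs_of_pos (hl.add_rhoB_pos hk)]
  simpa using he

theorem PB.eq_of_blockInv_add_single_eq_of_ne_zero (hl : PB m l) (hμ : PB m (l + e • Pi.single k 1))
    (hν : PB m (l + e' • Pi.single k' 1)) (hk : k ≠ 0) (hk' : k' ≠ 0) (he : e ≠ 0)
    (h : blockInv m (l + e • Pi.single k 1) = blockInv m (l + e' • Pi.single k' 1)) :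
    k = k' ∧ e = e' := by
  rw [blockInv_add_single, blockInv_add_single, add_right_inj, coordSign_of_ne_zero hk,
    coordSign_of_ne_zero hk', single_one_sub_single_one_eq_iff] at h
  rcases h with ⟨hshift, hbase⟩ | ⟨h, -⟩
  · obtain rfl := hl.abs_add_rhoB_inj hk hk' hbase
    have hpos := hμ.add_rhoB_pos hk
    have hpos' := hν.add_rhoB_pos hk
    rw [add_single_add_rhoB_apply_self] at hpos hpos'
    rw [abs_of_pos hpos, abs_of_pos hpos'] at hshift
    exact ⟨rfl, by linarith⟩
  · exact absurd h (hl.abs_add_rhoB_add_ne hμ hk he)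

theorem PB.blockInv_add_single_ne_add_single_zero (hl : PB m l) (hA : Atyp m (rhoB m) l)
    (hμ : PB m (l + e • Pi.single k 1)) (hk : k ≠ 0) (he : e ≠ 0) (e' : ℚ) :
    blockInv m (l + e • Pi.single k 1) ≠ blockInv m (l + e' • Pi.single 0 1) := by
  intro h
  rw [blockInv_add_single, blockInv_add_single, add_right_inj, coordSign_of_ne_zero hk,
    coordSign_zero, Finsupp.single_neg, Finsupp.single_neg, neg_sub_neg,
    single_one_sub_single_one_eq_iff] at h
  rcases h with ⟨h, -⟩ | ⟨h, -⟩
  · obtain ⟨k₀, hk₀, hk₀abs⟩ := hA.exists_abs_eq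
    rcases eq_or_ne k₀ k with rfl | hne
    · exact hl.abs_add_rhoB_add_ne hμ hk₀ he (h.trans hk₀abs.symm)
    · refine hne (hμ.abs_add_rhoB_inj hk₀ hk ?_)
      rw [add_single_add_rhoB_apply_self, add_single_add_rhoB_apply_of_ne _ hne, hk₀abs, h]
  · exact hl.abs_add_rhoB_add_ne hμ hk he h

theorem PB.eq_of_blockInv_add_single_zero_eq (hl : PB m l) (he : |e| = 1) (he' : |e'| = 1)
    (h : blockInv m (l + e • Pi.single 0 1) = blockInv m (l + e' • Pi.single 0 1)) : e = e' := by
  rw [blockInv_add_single, blockInv_add_single, add_right_inj, sub_left_inj,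
    Finsupp.single_left_inj (coordSign_ne_zero 0)] at h
  have hx0 := hl.add_rhoB_zero_ne_zero
  rcases abs_eq_abs.1 h with h | h
  · linarith
  · rcases (abs_eq zero_le_one).1 he with rfl | rfl <;>
      rcases (abs_eq zero_le_one).1 he' with rfl | rfl <;>
      first | rfl | exact absurd (by linarith) hx0

theorem PB.blockInv_add_single_ne (hl : PB m l) (hA : Atyp m (rhoB m) l)
    (hlast : l (Fin.last m) ≠ 0) (hμ : PB m (l + e • Pi.single k 1)) (he : |e| = 1) :
    blockInv m (l + e • Pi.single k 1) ≠ blockInv m l := by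
  intro h
  rw [blockInv_add_single, add_eq_left, sub_eq_zero,
    Finsupp.single_left_inj (coordSign_ne_zero k)] at h
  have he0 : e ≠ 0 := by rintro rfl; simp at he
  rcases eq_or_ne k 0 with rfl | hk
  · obtain ⟨k₀, hk₀, hk₀abs⟩ := hA.exists_abs_eq
    have h32 := hl.three_halves_le_add_rhoB hlast hk₀
    rw [abs_of_pos (hl.add_rhoB_pos hk₀)] at hk₀abs
    rcases abs_eq_abs.1 h with h | h
    · exact he0 (by linarith)
    · -- here `|(l + ρ)₀| = |e|/2 = 1/2`, but atypicality makes it one of the `(l + ρ)ₖ ≥ 3/2`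
      have : 2 * |(l + rhoB m) 0| = 1 := by
        rw [← he, show e = -(2 * (l + rhoB m) 0) by linarith, abs_neg, abs_mul, abs_two]
      linarith
  · exact hl.abs_add_rhoB_add_ne hμ hk he0 h

theorem exists_eq_add_single_of_mem_PlamB {μ : Fin (m+1) → ℚ} (hμ : μ ∈ PlamB m l) :
    (∃ (k : Fin (m+1)) (e : ℚ), |e| = 1 ∧ μ = l + e • Pi.single k 1) ∨
      (l (Fin.last m) ≠ 0 ∧ μ = l) := by
  rcases hμ.2 with ⟨i, -, rfl | rfl⟩ | ⟨hlast, rfl⟩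
  · exact Or.inl ⟨i, 1, abs_one, by rw [one_smul]; rfl⟩
  · exact Or.inl ⟨i, -1, by simp, by rw [neg_one_smul, sub_eq_add_neg]; rfl⟩
  · exact Or.inr ⟨by rwa [← Fin.natCast_eq_last], rfl⟩

theorem PB.eq_of_blockInv_add_single_eq (hl : PB m l) (hA : Atyp m (rhoB m) l)
    (hμ : PB m (l + e • Pi.single k 1))
    (hν : PB m (l + e' • Pi.single k' 1)) (he : |e| = 1) (he' : |e'| = 1)
    (h : blockInv m (l + e • Pi.single k 1) = blockInv m (l + e' • Pi.single k' 1)) :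
    k = k' ∧ e = e' := by
  have he0 : e ≠ 0 := by rintro rfl; simp at he
  have he0' : e' ≠ 0 := by rintro rfl; simp at he'
  rcases eq_or_ne k 0 with rfl | hk <;> rcases eq_or_ne k' 0 with rfl | hk'
  · exact ⟨rfl, hl.eq_of_blockInv_add_single_zero_eq he he' h⟩
  · exact absurd h.symm (hl.blockInv_add_single_ne_add_single_zero hA hν hk' he0' e)
  · exact absurd h (hl.blockInv_add_single_ne_add_single_zero hA hμ hk he0 e')
  · exact hl.eq_of_blockInv_add_single_eq_of_ne_zero hμ hν hk hk' he0 h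

theorem PB.blockInv_injOn_PlamB (hl : PB m l) (hA : Atyp m (rhoB m) l) :
    Set.InjOn (blockInv m) (PlamB m l) := by
  intro μ hμ ν hν h
  rcases exists_eq_add_single_of_mem_PlamB hμ with ⟨k, e, he, rfl⟩ | ⟨hlast, rfl⟩ <;>
    rcases exists_eq_add_single_of_mem_PlamB hν with ⟨k', e', he', rfl⟩ | ⟨hlast', rfl⟩
  · obtain ⟨rfl, rfl⟩ := hl.eq_of_blockInv_add_single_eq hA hμ.1 hν.1 he he' h
    rfl
  · exact absurd h (hl.blockInv_add_single_ne hA hlast' hμ.1 he)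
  · exact absurd h.symm (hl.blockInv_add_single_ne hA hlast hν.1 he')
  · rfl

end

theorem block_in_Plam_B_general (m : ℕ) (l : Fin (m+1) → ℚ)
    (hP : PB m l) (hA : Atyp m (rhoB m) l)
    (μ ν : Fin (m+1) → ℚ) (hμ : μ ∈ PlamB m l) (hν : ν ∈ PlamB m l) (hne : μ ≠ ν) :
    ¬ blockB m μ ν :=
  fun h => hne (hP.blockInv_injOn_PlamB hA hμ hν (blockInv_eq_of_blockB h))

/-- Lemma 4.4(2) for `osp(2m+1|2)`: for atypical `λ ∈ 𝒫` and distinct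
`μ, ν ∈ 𝒫_λ`, `μ` and `ν` are not block equivalent. -/
theorem block_in_Plam_B (m : ℕ) (hm : 1 ≤ m) (l : Fin (m+1) → ℚ)
    (hP : PB m l) (hA : Atyp m (rhoB m) l)
    (μ ν : Fin (m+1) → ℚ) (hμ : μ ∈ PlamB m l) (hν : ν ∈ PlamB m l) (hne : μ ≠ ν) :
    ¬ blockB m μ ν :=
  block_in_Plam_B_general m l hP hA μ ν hμ hν hne
end

section
/- For osp(2m|2): let λ ∈ 𝒫 with λ₀ ≥ m and let k be the largest index 1 ≤ k ≤ m with λ_k ≠ 0 (k = 0 if λ_i = 0 for all 1 ≤ i ≤ m). Then λ^δ ∈ 𝒫 if and only if λ₀ ≤ 2m−2−k. -/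
open Finset
open Fin.NatCast

/-!
`λ^δ` differs from `λ` only in coordinate `0`, so it is dominant exactly when `2m − 2 − λ₀` is a
nonnegative integer above which all `λ_i` vanish. Since `k` is the last nonzero coordinate, this
says `k ≤ 2m − 2 − λ₀`.
-/

lemma natCast_fin_ne_zero {m i : ℕ} (h1 : 1 ≤ i) (h2 : i ≤ m) : (i : Fin (m+1)) ≠ 0 := by
  rw [Ne, Fin.natCast_eq_zero]
  exact Nat.not_dvd_of_pos_of_lt h1 (Nat.lt_succ_of_le h2)

lemma deltaD_apply_zero (m : ℕ) (l : Fin (m+1) → ℚ) : deltaD m l 0 = 2*(m : ℚ) - 2 - l 0 :=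
  if_pos rfl

lemma deltaD_apply_of_ne_zero (m : ℕ) (l : Fin (m+1) → ℚ) {i : Fin (m+1)} (hi : i ≠ 0) :
    deltaD m l i = l i :=
  if_neg hi

lemma PD_iff_of_eq_of_ne_zero {m : ℕ} (hm : 2 ≤ m) {l μ : Fin (m+1) → ℚ} (hl : PD m l)
    (hμ : ∀ i, i ≠ 0 → μ i = l i) :
    PD m μ ↔ (∃ z : ℤ, μ 0 = z) ∧ 0 ≤ μ 0 ∧
      ∀ i : ℕ, 1 ≤ i → i ≤ m → μ 0 < (i : ℚ) → l (i : Fin (m+1)) = 0 := by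
  obtain ⟨hint, -, hmono, habs, hnn, -⟩ := hl
  have hμl : ∀ i : ℕ, 1 ≤ i → i ≤ m → μ (i : Fin (m+1)) = l (i : Fin (m+1)) :=
    fun i h1 h2 => hμ _ (natCast_fin_ne_zero h1 h2)
  constructor
  · rintro ⟨hint', h0', -, -, -, hzero'⟩
    refine ⟨hint' 0, h0', fun i h1 h2 hlt => ?_⟩
    rw [← hμl i h1 h2]
    exact hzero' i h1 h2 hlt
  · rintro ⟨hint0, h0, hzero⟩
    refine ⟨fun i => ?_, h0, fun i j hi hij hjm => ?_, ?_, fun i hi him => ?_,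
      fun i hi him hlt => ?_⟩
    · by_cases hi : i = 0
      · exact hi ▸ hint0
      · exact hμ i hi ▸ hint i
    · rw [hμl i hi (by omega), hμl j (by omega) (by omega)]
      exact hmono i j hi hij hjm
    · rw [hμl m (by omega) le_rfl, hμl (m-1) (by omega) (by omega)]
      exact habs
    · rw [hμl i hi (by omega)]
      exact hnn i hi him
    · rw [hμl i hi him]
      exact hzero i hi him hlt

lemma nonneg_and_eq_zero_above_iff {f : ℕ → ℚ} {m k : ℕ} (hkm : k ≤ m)
    (hk : k = 0 ∨ (1 ≤ k ∧ f k ≠ 0)) (hkmax : ∀ i : ℕ, k < i → i ≤ m → f i = 0) (a : ℚ) :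
    (0 ≤ a ∧ ∀ i : ℕ, 1 ≤ i → i ≤ m → a < (i : ℚ) → f i = 0) ↔ (k : ℚ) ≤ a := by
  constructor
  · rintro ⟨ha, hzero⟩
    rcases hk with rfl | ⟨hk1, hkne⟩
    · exact_mod_cast ha
    · by_contra! hlt
      exact hkne (hzero k hk1 hkm hlt)
  · intro hka
    refine ⟨le_trans (Nat.cast_nonneg k) hka, fun i _ him hlt => hkmax i ?_ him⟩
    exact_mod_cast hka.trans_lt hlt

theorem deltaflip_dominant_iff_D_general (m : ℕ) (hm : 2 ≤ m) (l : Fin (m+1) → ℚ)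
    (hP : PD m l)
    (k : ℕ) (hkm : k ≤ m)
    (hk : k = 0 ∨ (1 ≤ k ∧ l (k : Fin (m+1)) ≠ 0))
    (hkmax : ∀ i : ℕ, k < i → i ≤ m → l (i : Fin (m+1)) = 0) :
    PD m (deltaD m l) ↔ l 0 ≤ 2*(m : ℚ) - 2 - k := by
  have hint0 : ∃ z : ℤ, deltaD m l 0 = z := by
    obtain ⟨z, hz⟩ := hP.1 0
    exact ⟨2*m - 2 - z, by rw [deltaD_apply_zero, hz]; push_cast; ring⟩
  rw [PD_iff_of_eq_of_ne_zero hm hP (fun i hi => deltaD_apply_of_ne_zero m l hi),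
    and_iff_right hint0,
    nonneg_and_eq_zero_above_iff (f := fun i => l (i : Fin (m+1))) hkm hk hkmax, deltaD_apply_zero]
  constructor <;> intro h <;> linarith

/-- For `osp(2m|2)`: for `λ ∈ 𝒫` with `λ₀ ≥ m` and `k` the largest index with
`λ_k ≠ 0` (`k = 0` if none), `λ^δ ∈ 𝒫` iff `λ₀ ≤ 2m−2−k`. -/
theorem deltaflip_dominant_iff_D (m : ℕ) (hm : 2 ≤ m) (l : Fin (m+1) → ℚ)
    (hP : PD m l) (h0 : (m : ℚ) ≤ l 0)
    (k : ℕ) (hkm : k ≤ m)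
    (hk : k = 0 ∨ (1 ≤ k ∧ l (k : Fin (m+1)) ≠ 0))
    (hkmax : ∀ i : ℕ, k < i → i ≤ m → l (i : Fin (m+1)) = 0) :
    PD m (deltaD m l) ↔ l 0 ≤ 2*(m : ℚ) - 2 - k :=
  deltaflip_dominant_iff_D_general m hm l hP k hkm hk hkmax
end

section
/- For osp(2m+1|2): let λ ∈ 𝒫 with λ₀ ≥ m and λ^δ ∈ 𝒫 (equivalently m ≤ λ₀ ≤ 2m−1−k, where k is the largest index with λ_k ≠ 0). Then 1 ≤ 2m−λ₀ ≤ m, λ_{2m−λ₀} = 0, and ⟨λ+ρ, δ+ε_{2m−λ₀}⟩ = 0; in particular λ is atypical. -/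
open Finset
open Fin.NatCast

/-! Since `(λ^δ)₀ = 2m-1-λ₀ ≥ 0`, the index `k = 2m-λ₀` lies in `[1, m]`, and `(λ^δ)₀ = k-1 < k`, so
dominance of `λ^δ` forces `λ_k = 0`. Then `⟨λ+ρ, δ+ε_k⟩ = (m-k+1/2) - (λ₀+1/2-m) = 0`. -/

theorem Fin.natCast_ne_zero_of_le {m k : ℕ} (hk : 1 ≤ k) (hkm : k ≤ m) : (k : Fin (m+1)) ≠ 0 := by
  rw [Ne, Fin.natCast_eq_zero]
  exact Nat.not_dvd_of_pos_of_lt hk (by omega)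

theorem deltaB_apply_zero (m : ℕ) (l : Fin (m+1) → ℚ) : deltaB m l 0 = 2*(m : ℚ) - 1 - l 0 :=
  if_pos rfl

theorem deltaB_apply_of_ne_zero (m : ℕ) (l : Fin (m+1) → ℚ) {i : Fin (m+1)} (hi : i ≠ 0) :
    deltaB m l i = l i :=
  if_neg hi

theorem rhoB_apply_zero (m : ℕ) : rhoB m 0 = 1/2 - (m : ℚ) :=
  if_pos rfl

theorem rhoB_apply_natCast {m k : ℕ} (hk : 1 ≤ k) (hkm : k ≤ m) :
    rhoB m (k : Fin (m+1)) = (m : ℚ) - k + 1/2 := by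
  rw [rhoB, if_neg (Fin.natCast_ne_zero_of_le hk hkm), Fin.val_cast_of_lt (by omega)]

theorem form_eps_zero_add_eps {m k : ℕ} (hk : 1 ≤ k) (hkm : k ≤ m) (v : Fin (m+1) → ℚ) :
    form m v (eps m 0 + eps m k) = v k - v 0 := by
  have hk0 := Fin.natCast_ne_zero_of_le hk hkm
  rw [form, Finset.sum_eq_single (k : Fin (m+1))]
  · simp only [eps, Nat.cast_zero, Pi.add_apply, Pi.single_eq_same, Pi.single_eq_of_ne hk0,
      Pi.single_eq_of_ne hk0.symm, if_neg hk0]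
    ring
  · intro i _ hik
    by_cases hi : i = 0 <;> simp [hi, hik, eps]
  · simp

theorem PB.le_of_deltaB {m : ℕ} {l : Fin (m+1) → ℚ} (hδ : PB m (deltaB m l)) :
    l 0 ≤ 2*(m : ℚ) - 1 := by
  have := hδ.2.1
  rw [deltaB_apply_zero] at this
  linarith

theorem PB.apply_eq_zero_of_deltaB {m k : ℕ} {l : Fin (m+1) → ℚ} (hδ : PB m (deltaB m l))
    (hk : 1 ≤ k) (hkm : k ≤ m) (hlt : 2*(m : ℚ) - 1 - l 0 < k) : l (k : Fin (m+1)) = 0 := by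
  have := hδ.2.2.2.2 k hk hkm (by rwa [deltaB_apply_zero])
  rwa [deltaB_apply_of_ne_zero m l (Fin.natCast_ne_zero_of_le hk hkm)] at this

theorem high_level_atypical_B_general (m : ℕ) (l : Fin (m+1) → ℚ)
    (l0 : ℕ) (hl0 : (l0 : ℚ) = l 0) (h0 : (m : ℚ) ≤ l 0) (hδ : PB m (deltaB m l)) :
    1 ≤ 2*m - l0 ∧ 2*m - l0 ≤ m ∧
    l ((2*m - l0 : ℕ) : Fin (m+1)) = 0 ∧
    form m (l + rhoB m) (eps m 0 + eps m (2*m - l0)) = 0 ∧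
    Atyp m (rhoB m) l := by
  have hlow : m ≤ l0 := by exact_mod_cast hl0 ▸ h0
  have hup : l0 + 1 ≤ 2*m := by
    have := hδ.le_of_deltaB
    exact_mod_cast (by linarith : (l0 : ℚ) + 1 ≤ 2*m)
  set k := 2*m - l0 with hk
  have hk1 : 1 ≤ k := by omega
  have hkm : k ≤ m := by omega
  have hkQ : (k : ℚ) = 2*m - l 0 := by rw [hk, Nat.cast_sub (by omega), ← hl0]; push_cast; ring
  have hlk : l (k : Fin (m+1)) = 0 := hδ.apply_eq_zero_of_deltaB hk1 hkm (by linarith)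
  have hform : form m (l + rhoB m) (eps m 0 + eps m k) = 0 := by
    rw [form_eps_zero_add_eps hk1 hkm, Pi.add_apply, Pi.add_apply, hlk,
      rhoB_apply_natCast hk1 hkm, rhoB_apply_zero, hkQ]
    ring
  exact ⟨hk1, hkm, hlk, hform, k, hk1, hkm, 1, Or.inl rfl, by rwa [one_smul]⟩

/-- For `osp(2m+1|2)`: if `λ ∈ 𝒫` with `λ₀ ≥ m` and `λ^δ ∈ 𝒫`, then
`1 ≤ 2m−λ₀ ≤ m`, `λ_{2m−λ₀} = 0` and `⟨λ+ρ, δ+ε_{2m−λ₀}⟩ = 0`;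
in particular `λ` is atypical. -/
theorem high_level_atypical_B (m : ℕ) (hm : 1 ≤ m) (l : Fin (m+1) → ℚ) (hP : PB m l)
    (l0 : ℕ) (hl0 : (l0 : ℚ) = l 0) (h0 : (m : ℚ) ≤ l 0) (hδ : PB m (deltaB m l)) :
    1 ≤ 2*m - l0 ∧ 2*m - l0 ≤ m ∧
    l ((2*m - l0 : ℕ) : Fin (m+1)) = 0 ∧
    form m (l + rhoB m) (eps m 0 + eps m (2*m - l0)) = 0 ∧
    Atyp m (rhoB m) l :=
  high_level_atypical_B_general m l l0 hl0 h0 hδ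
end

section
/- (Lemma 2.4, osp(2m|2)) For every λ ∈ 𝒫 with λ₀ ≥ m, the following identity holds in K: chM(λ) − chM(λ^δ) = (∏_{α∈Δ₁⁺}(e^{α/2} + e^{−α/2}) / ∏_{α∈Δ₀⁺}(e^{α/2} − e^{−α/2})) · Σ_{w∈W} det(w) e^{w(λ+ρ)}, where λ^δ = (2m−2−λ₀)δ + Σ_{i=1}^m λ_i ε_i. -/
open Finset
open Fin.NatCast

/-- The group algebra `A = ℤ[Γ]` (with `Γ ⊆ ℚ^{1+m}` the weight lattice). -/
abbrev Am (m : ℕ) : Type := AddMonoidAlgebra ℤ (Fin (m+1) → ℚ)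

noncomputable instance (m : ℕ) : IsDomain (Am m) := NoZeroDivisors.to_isDomain _

/-- The fraction field `K` of `A`. -/
abbrev Km (m : ℕ) : Type := FractionRing (Am m)

/-- The element `e^μ ∈ K`. -/
noncomputable def ee (m : ℕ) (μ : Fin (m+1) → ℚ) : Km m :=
  algebraMap (Am m) (Km m) (AddMonoidAlgebra.single μ 1)

/-- The Weyl group `W_o` of `o(2m)` (fixing coordinate 0). -/
def WoD (m : ℕ) : Subgroup (GLQ m) := Subgroup.closure (permSet m ∪ doubleFlipSet m)

/-- `ρ_o` for `o(2m)`. -/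
noncomputable def rhooD (m : ℕ) : Fin (m+1) → ℚ :=
  fun i => if i = 0 then 0 else (m : ℚ) - (i : ℕ)

/-- The Weyl character `chL(μ)` of the irreducible `o(2m)`-module with highest
weight `μ`, as an element of `K`. -/
noncomputable def chLD (m : ℕ) (μ : Fin (m+1) → ℚ) : Km m :=
  (∑ᶠ w ∈ (WoD m : Set (GLQ m)),
      ((LinearMap.det (LinearEquiv.toLinearMap w) : ℚ) : Km m) *
        ee m (w (μ + rhooD m) - rhooD m)) /
  ∏ p ∈ Finset.filter (fun p : ℕ × ℕ => p.1 < p.2) (Finset.Icc 1 m ×ˢ Finset.Icc 1 m),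
    ((1 - ee m (-(eps m p.1 - eps m p.2))) * (1 - ee m (-(eps m p.1 + eps m p.2))))

/-- The character `chM(ν)` of the generalized Verma module for `osp(2m|2)`. -/
noncomputable def chMD (m : ℕ) (ν : Fin (m+1) → ℚ) : Km m :=
  ((∏ i ∈ Finset.Icc 1 m,
      ((1 + ee m (-(eps m 0 - eps m i))) * (1 + ee m (-(eps m 0 + eps m i))))) /
    (1 - ee m (-((2 : ℚ) • eps m 0)))) *
  ee m (ν 0 • eps m 0) * chLD m (ν - ν 0 • eps m 0)

/-!
The Weyl group `W` is the disjoint union `W_o ∪ W_o σ`, where `σ` is the sign change of `δ`: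
`σ` commutes with `W_o`, and `W_o` fixes `δ`. Writing `λ + ρ = (λ₀ + 1 - m) δ + μ` with
`μ = λ - λ₀ δ + ρ_o`, which `σ` fixes, the alternating sum over `W` therefore factors as
`(e^{(λ₀+1-m)δ} - e^{-(λ₀+1-m)δ}) · e^{ρ_o}` times the Weyl numerator of `chL(λ - λ₀ δ)`.
Pulling `e^{α/2}` out of every factor turns the two products of the right-hand side into
`e^{mδ}` resp. `e^{ρ_o}` times the products occurring in `chM` and `chL`, and `e^δ - e^{-δ}`
into `e^δ (1 - e^{-2δ})`; what is left is `e^{mδ} e^{±(λ₀+1-m)δ} = e^δ e^{λ₀δ}`,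
resp. `e^δ e^{(2m-2-λ₀)δ}`. All sums are finite because `W_o` permutes the finite spanning set
of signed coordinate vectors.
-/

section Exponential

variable {m : ℕ}

lemma ee_add (a b : Fin (m+1) → ℚ) : ee m (a + b) = ee m a * ee m b := by
  rw [ee, ee, ee, ← map_mul, AddMonoidAlgebra.single_mul_single, one_mul]

lemma ee_zero : ee m 0 = 1 := by
  rw [ee, ← AddMonoidAlgebra.one_def, map_one]

lemma ee_sum {ι : Type*} (s : Finset ι) (f : ι → Fin (m+1) → ℚ) :
    ee m (∑ i ∈ s, f i) = ∏ i ∈ s, ee m (f i) := by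
  classical
  induction s using Finset.induction_on with
  | empty => rw [sum_empty, prod_empty, ee_zero]
  | insert _ _ h ih => rw [sum_insert h, prod_insert h, ee_add, ih]

lemma ee_ne_zero (a : Fin (m+1) → ℚ) : ee m a ≠ 0 := by
  rw [ee, map_ne_zero_iff _ (IsFractionRing.injective (Am m) (Km m))]
  exact AddMonoidAlgebra.single_ne_zero.mpr one_ne_zero

lemma one_sub_ee_ne_zero {a : Fin (m+1) → ℚ} (ha : a ≠ 0) : (1 : Km m) - ee m a ≠ 0 := by
  rw [ee, ← map_one (algebraMap (Am m) (Km m)), ← map_sub,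
    map_ne_zero_iff _ (IsFractionRing.injective (Am m) (Km m)), sub_ne_zero,
    AddMonoidAlgebra.one_def]
  exact fun h => ha ((AddMonoidAlgebra.single_left_inj one_ne_zero).mp h).symm

lemma ee_half_add_ee_neg_half (α : Fin (m+1) → ℚ) :
    ee m ((1/2 : ℚ) • α) + ee m (-((1/2 : ℚ) • α)) = ee m ((1/2 : ℚ) • α) * (1 + ee m (-α)) := by
  rw [mul_add, mul_one, ← ee_add]
  congr 2
  module

lemma ee_half_sub_ee_neg_half (α : Fin (m+1) → ℚ) :
    ee m ((1/2 : ℚ) • α) - ee m (-((1/2 : ℚ) • α)) = ee m ((1/2 : ℚ) • α) * (1 - ee m (-α)) := by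
  rw [mul_sub, mul_one, ← ee_add]
  congr 2
  module

end Exponential

section Coordinates

variable {m : ℕ}

lemma eps_apply_natCast {i k : ℕ} (hi : i ≤ m) (hk : k ≤ m) :
    eps m i (k : Fin (m+1)) = if k = i then 1 else 0 := by
  rw [eps, Pi.single_apply]
  congr 1
  rw [Fin.ext_iff, Fin.val_cast_of_lt (Nat.lt_succ_of_le hi),
    Fin.val_cast_of_lt (Nat.lt_succ_of_le hk)]

lemma eps_zero_apply (k : Fin (m+1)) : eps m 0 k = if k = 0 then 1 else 0 := by
  rw [eps, Nat.cast_zero, Pi.single_apply]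

lemma eps_sub_eps_ne_zero {i j : ℕ} (hi : i ≤ m) (hj : j ≤ m) (hij : i ≠ j) :
    eps m i - eps m j ≠ 0 := fun h => by
  simpa [eps_apply_natCast hi hi, eps_apply_natCast hj hi, hij] using congrFun h (i : Fin (m+1))

lemma eps_add_eps_ne_zero {i j : ℕ} (hi : i ≤ m) (hj : j ≤ m) (hij : i ≠ j) :
    eps m i + eps m j ≠ 0 := fun h => by
  simpa [eps_apply_natCast hi hi, eps_apply_natCast hj hi, hij] using congrFun h (i : Fin (m+1))

lemma smul_eps_zero_ne_zero {t : ℚ} (ht : t ≠ 0) : t • eps m 0 ≠ 0 := fun h => by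
  simpa [eps_zero_apply, ht] using congrFun h 0

lemma sum_eps_fst_eq_rhooD :
    ∑ p ∈ filter (fun p : ℕ × ℕ => p.1 < p.2) (Icc 1 m ×ˢ Icc 1 m), eps m p.1 = rhooD m := by
  funext k
  obtain ⟨k, hk⟩ := k
  have hkm : k ≤ m := Nat.le_of_lt_succ hk
  have hcast : (⟨k, hk⟩ : Fin (m+1)) = (k : Fin (m+1)) := (Fin.cast_val_eq_self _).symm
  have hterm : ∀ p ∈ filter (fun p : ℕ × ℕ => p.1 < p.2) (Icc 1 m ×ˢ Icc 1 m),
      eps m p.1 (k : Fin (m+1)) = if p.1 = k then 1 else 0 := by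
    intro p hp
    simp only [mem_filter, mem_product, mem_Icc] at hp
    simp only [eps_apply_natCast hp.1.1.2 hkm, eq_comm]
  have hpairs : filter (fun p : ℕ × ℕ => p.1 = k) (filter (fun p : ℕ × ℕ => p.1 < p.2)
      (Icc 1 m ×ˢ Icc 1 m)) = (Icc 1 m ∩ {k}) ×ˢ Ioc k m := by
    ext ⟨a, b⟩
    simp only [mem_filter, mem_product, mem_Icc, mem_inter, mem_singleton, mem_Ioc]
    omega
  rw [Finset.sum_apply, hcast, sum_congr rfl hterm, sum_boole, hpairs, card_product,
    Nat.card_Ioc, rhooD]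
  rcases Nat.eq_zero_or_pos k with rfl | hk1
  · simp
  · rw [if_neg (by simp [Fin.ext_iff, Fin.val_cast_of_lt hk]; omega),
      inter_singleton_of_mem (mem_Icc.mpr ⟨hk1, hkm⟩), card_singleton, one_mul,
      Fin.val_cast_of_lt hk, Nat.cast_sub hkm]

theorem Subgroup.coe_closure_union_singleton_of_commute {G : Type*} [Group G] {S : Set G}
    {g : G} (hg : g * g = 1) (hcomm : ∀ h ∈ Subgroup.closure S, Commute g h) :
    (Subgroup.closure (S ∪ {g}) : Set G) =
      (Subgroup.closure S : Set G) ∪ (· * g) '' Subgroup.closure S := by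
  have hginv : g⁻¹ = g := inv_eq_of_mul_eq_one_right hg
  apply Set.Subset.antisymm
  · intro x hx
    induction hx using Subgroup.closure_induction with
    | mem x hx =>
      rcases hx with hx | rfl
      · exact Or.inl (Subgroup.subset_closure hx)
      · exact Or.inr ⟨1, one_mem _, one_mul _⟩
    | one => exact Or.inl (one_mem _)
    | mul x y _ _ hx hy =>
      rcases hx with hx | ⟨x, hx, rfl⟩ <;> rcases hy with hy | ⟨y, hy, rfl⟩
      · exact Or.inl (mul_mem hx hy)
      · exact Or.inr ⟨x * y, mul_mem hx hy, by simp only [mul_assoc]⟩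
      · exact Or.inr ⟨x * y, mul_mem hx hy, by simp only [mul_assoc, (hcomm y hy).eq]⟩
      · refine Or.inl ?_
        rw [mul_assoc, ← mul_assoc g, (hcomm y hy).eq, mul_assoc, hg, mul_one]
        exact mul_mem hx hy
    | inv x _ hx =>
      rcases hx with hx | ⟨x, hx, rfl⟩
      · exact Or.inl (inv_mem hx)
      · exact Or.inr ⟨x⁻¹, inv_mem hx, by rw [mul_inv_rev, hginv, (hcomm _ (inv_mem hx)).eq]⟩
  · rintro x (hx | ⟨x, hx, rfl⟩)
    · exact Subgroup.closure_mono Set.subset_union_left hx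
    · exact mul_mem (Subgroup.closure_mono Set.subset_union_left hx)
        (Subgroup.subset_closure (Or.inr rfl))

open scoped Pointwise in
theorem LinearEquiv.finite_stabilizer_of_span_eq_top {R M : Type*} [Semiring R]
    [AddCommMonoid M] [Module R M] {B : Set M} (hB : B.Finite) (hspan : Submodule.span R B = ⊤) :
    (MulAction.stabilizer (M ≃ₗ[R] M) B : Set (M ≃ₗ[R] M)).Finite := by
  have : Finite B := hB
  refine Set.Finite.of_finite_image (f := fun (e : M ≃ₗ[R] M) (b : B) => e b)
    ((Set.Finite.pi (t := fun _ : B => B) fun _ => hB).subset ?_) ?_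
  · rintro _ ⟨e, he, rfl⟩ b -
    exact (MulAction.mem_stabilizer_set' hB).mp he b.2
  · intro e₁ _ e₂ _ h
    exact LinearEquiv.toLinearMap_injective
      (LinearMap.ext_on hspan fun b hb => congrFun h ⟨b, hb⟩)

section WeylGroup

variable {m : ℕ}

def sigma0Matrix (m : ℕ) : Matrix (Fin (m+1)) (Fin (m+1)) ℚ :=
  Matrix.diagonal fun k => if k = 0 then -1 else 1

lemma sigma0Matrix_mulVec (v : Fin (m+1) → ℚ) (k : Fin (m+1)) :
    (sigma0Matrix m).mulVec v k = if k = 0 then -(v k) else v k := by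
  rw [sigma0Matrix, Matrix.mulVec_diagonal]
  split_ifs <;> ring

noncomputable def sigma0 (m : ℕ) : GLQ m :=
  LinearEquiv.ofInvolutive (Matrix.toLin' (sigma0Matrix m)) fun v => funext fun k => by
    simp only [Matrix.toLin'_apply, sigma0Matrix_mulVec]
    split_ifs <;> simp

lemma sigma0_apply (v : Fin (m+1) → ℚ) (k : Fin (m+1)) :
    sigma0 m v k = if k = 0 then -(v k) else v k :=
  sigma0Matrix_mulVec v k

lemma det_sigma0 : LinearMap.det (sigma0 m).toLinearMap = -1 := by
  change LinearMap.det (Matrix.toLin' (sigma0Matrix m)) = -1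
  simp [LinearMap.det_toLin', sigma0Matrix, Matrix.det_diagonal, prod_ite_eq']

lemma sigma0_mul_self : sigma0 m * sigma0 m = 1 :=
  LinearEquiv.ext fun v => funext fun k => by
    change sigma0 m (sigma0 m v) k = v k
    rw [sigma0_apply, sigma0_apply]
    split_ifs <;> simp

lemma flip0Set_eq : flip0Set m = {sigma0 m} := by
  ext w
  refine ⟨fun hw => LinearEquiv.ext fun v => funext fun k => ?_, ?_⟩
  · rw [hw v k, sigma0_apply]
  · rintro rfl v k
    exact sigma0_apply v k

lemma sigma0_eps_zero : sigma0 m (eps m 0) = -eps m 0 := by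
  funext k
  rw [sigma0_apply, Pi.neg_apply, eps_zero_apply]
  split_ifs <;> simp

lemma sigma0_smul_eps_zero_add {μ : Fin (m+1) → ℚ} (hμ : μ 0 = 0) (c : ℚ) :
    sigma0 m (c • eps m 0 + μ) = (-c) • eps m 0 + μ := by
  funext k
  rw [sigma0_apply]
  split_ifs with hk
  · subst hk
    simp [hμ, eps_zero_apply]
  · simp [eps_zero_apply, hk]

def signedSingles (m : ℕ) : Set (Fin (m+1) → ℚ) :=
  Set.range fun p : SignType × Fin (m+1) => (p.1 : ℚ) • Pi.single p.2 1

lemma finite_signedSingles : (signedSingles m).Finite := Set.finite_range _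

lemma span_signedSingles : Submodule.span ℚ (signedSingles m) = ⊤ := by
  refine eq_top_mono (Submodule.span_mono ?_) (Pi.basisFun ℚ (Fin (m+1))).span_eq
  rintro _ ⟨k, rfl⟩
  exact ⟨(1, k), by simp⟩

section SignedPermutation

variable {w : GLQ m} {σ : Equiv.Perm (Fin (m+1))} {s : Fin (m+1) → SignType}

lemma mapsTo_signedSingles_of_apply_eq (hw : ∀ v k, w v k = s k * v (σ k)) :
    Set.MapsTo w (signedSingles m) (signedSingles m) := by
  rintro _ ⟨⟨t, k⟩, rfl⟩
  refine ⟨(s (σ.symm k) * t, σ.symm k), funext fun j => ?_⟩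
  simp only [Pi.smul_apply, hw, Pi.single_apply, smul_eq_mul, SignType.coe_mul,
    ← σ.eq_symm_apply]
  split_ifs with h <;> simp [h]

variable (hw : ∀ v k, w v k = s k * v (σ k)) (hσ : σ 0 = 0) (hs : s 0 = 1)
include hw hσ hs

lemma apply_eps_zero_of_apply_eq : w (eps m 0) = eps m 0 := by
  funext k
  have hσk : σ k = 0 ↔ k = 0 := σ.injective.eq_iff' hσ
  rw [hw, eps_zero_apply, eps_zero_apply, if_congr hσk rfl rfl]
  split_ifs with hk
  · simp [hk, hs]
  · simp

lemma commute_sigma0_of_apply_eq : w * sigma0 m = sigma0 m * w :=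
  LinearEquiv.ext fun v => funext fun k => by
    have hσk : σ k = 0 ↔ k = 0 := σ.injective.eq_iff' hσ
    rw [LinearEquiv.mul_apply, LinearEquiv.mul_apply, hw, sigma0_apply, sigma0_apply, hw,
      if_congr hσk rfl rfl]
    split_ifs with hk
    · simp [hk, hs]
    · rfl

end SignedPermutation

lemma exists_signedPerm_of_mem {w : GLQ m} (hw : w ∈ permSet m ∪ doubleFlipSet m) :
    ∃ (σ : Equiv.Perm (Fin (m+1))) (s : Fin (m+1) → SignType),
      σ 0 = 0 ∧ s 0 = 1 ∧ ∀ v k, w v k = s k * v (σ k) := by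
  rcases hw with ⟨σ, hσ, hw⟩ | ⟨i, j, hi, hj, -, hw⟩
  · exact ⟨σ, 1, hσ, rfl, fun v k => by simp [hw]⟩
  · refine ⟨1, fun k => if k = i ∨ k = j then -1 else 1, rfl, ?_, fun v k => ?_⟩
    · simp [Ne.symm hi, Ne.symm hj]
    · by_cases h : k = i ∨ k = j <;> simp [hw, h]

open scoped Pointwise in
lemma WoD_le_centralizer_inf_stabilizer : WoD m ≤ Subgroup.centralizer {sigma0 m} ⊓
    MulAction.stabilizer (GLQ m) (eps m 0) ⊓ MulAction.stabilizer (GLQ m) (signedSingles m) := by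
  refine (Subgroup.closure_le _).mpr fun w hw => ?_
  obtain ⟨σ, s, hσ, hs, hw⟩ := exists_signedPerm_of_mem hw
  refine ⟨⟨Subgroup.mem_centralizer_singleton_iff.mpr (commute_sigma0_of_apply_eq hw hσ hs),
    MulAction.mem_stabilizer_iff.mpr (apply_eps_zero_of_apply_eq hw hσ hs)⟩, ?_⟩
  exact (MulAction.mem_stabilizer_set' finite_signedSingles).mpr
    fun _ hv => mapsTo_signedSingles_of_apply_eq hw hv

lemma finite_WoD : (WoD m : Set (GLQ m)).Finite :=
  (LinearEquiv.finite_stabilizer_of_span_eq_top finite_signedSingles span_signedSingles).subset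
    fun _ hw => (WoD_le_centralizer_inf_stabilizer hw).2

lemma apply_eps_zero_of_mem_WoD {w : GLQ m} (hw : w ∈ WoD m) : w (eps m 0) = eps m 0 :=
  MulAction.mem_stabilizer_iff.mp (WoD_le_centralizer_inf_stabilizer hw).1.2

lemma sigma0_notMem_WoD : sigma0 m ∉ WoD m := fun h => by
  have h0 := congrFun (apply_eps_zero_of_mem_WoD h) 0
  norm_num [sigma0_eps_zero, eps_zero_apply] at h0

lemma coe_WD : (WD m : Set (GLQ m)) = (WoD m : Set (GLQ m)) ∪ (· * sigma0 m) '' WoD m := by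
  rw [WD, flip0Set_eq, Subgroup.coe_closure_union_singleton_of_commute sigma0_mul_self]
  · rfl
  · exact fun w hw =>
      (Subgroup.mem_centralizer_singleton_iff.mp (WoD_le_centralizer_inf_stabilizer hw).1.1).symm

lemma finsum_mem_WD {M : Type*} [AddCommMonoid M] (f : GLQ m → M) :
    ∑ᶠ w ∈ (WD m : Set (GLQ m)), f w =
      ∑ᶠ w ∈ (WoD m : Set (GLQ m)), f w + ∑ᶠ w ∈ (WoD m : Set (GLQ m)), f (w * sigma0 m) := by
  have hdisj : Disjoint (WoD m : Set (GLQ m)) ((· * sigma0 m) '' WoD m) := by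
    refine Set.disjoint_left.mpr fun _ hw ⟨w', hw', hww'⟩ => sigma0_notMem_WoD (m := m) ?_
    rw [← hww'] at hw
    simpa using mul_mem (inv_mem hw') hw
  rw [coe_WD, finsum_mem_union hdisj finite_WoD (finite_WoD.image _),
    finsum_mem_image fun _ _ _ _ h => mul_right_cancel h]

end WeylGroup

section AlternatingSum

variable {m : ℕ}

lemma det_mul_sigma0 (w : GLQ m) :
    LinearMap.det (w * sigma0 m).toLinearMap = -LinearMap.det w.toLinearMap := by
  rw [LinearEquiv.coe_toLinearMap_mul, map_mul, det_sigma0, mul_neg_one]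

lemma finsum_WD_det_mul_ee (c : ℚ) {μ : Fin (m+1) → ℚ} (hμ : μ 0 = 0) :
    ∑ᶠ w ∈ (WD m : Set (GLQ m)),
        ((LinearMap.det w.toLinearMap : ℚ) : Km m) * ee m (w (c • eps m 0 + μ)) =
      (ee m (c • eps m 0) - ee m ((-c) • eps m 0)) *
        ∑ᶠ w ∈ (WoD m : Set (GLQ m)), ((LinearMap.det w.toLinearMap : ℚ) : Km m) * ee m (w μ) := by
  have hWo : ∀ w ∈ (WoD m : Set (GLQ m)),
      ((LinearMap.det w.toLinearMap : ℚ) : Km m) * ee m (w (c • eps m 0 + μ)) =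
        ee m (c • eps m 0) * (((LinearMap.det w.toLinearMap : ℚ) : Km m) * ee m (w μ)) := by
    intro w hw
    rw [map_add, map_smul, apply_eps_zero_of_mem_WoD hw, ee_add]
    ring
  have hWoσ : ∀ w ∈ (WoD m : Set (GLQ m)),
      ((LinearMap.det (w * sigma0 m).toLinearMap : ℚ) : Km m) *
          ee m ((w * sigma0 m) (c • eps m 0 + μ)) =
        -ee m ((-c) • eps m 0) * (((LinearMap.det w.toLinearMap : ℚ) : Km m) * ee m (w μ)) := by
    intro w hw
    rw [det_mul_sigma0, LinearEquiv.mul_apply, sigma0_smul_eps_zero_add hμ, map_add, map_smul,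
      apply_eps_zero_of_mem_WoD hw, ee_add]
    push_cast
    ring
  rw [finsum_mem_WD, finsum_mem_congr rfl hWo, finsum_mem_congr rfl hWoσ, ← mul_finsum_mem,
    ← mul_finsum_mem]
  ring

lemma finsum_WoD_det_mul_ee (μ ν : Fin (m+1) → ℚ) :
    ∑ᶠ w ∈ (WoD m : Set (GLQ m)), ((LinearMap.det w.toLinearMap : ℚ) : Km m) * ee m (w μ) =
      ee m ν * ∑ᶠ w ∈ (WoD m : Set (GLQ m)),
        ((LinearMap.det w.toLinearMap : ℚ) : Km m) * ee m (w μ - ν) := by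
  rw [mul_finsum_mem]
  refine finsum_mem_congr rfl fun w _ => ?_
  rw [← sub_add_cancel (w μ) ν, ee_add, add_sub_cancel_right]
  ring

lemma add_rhoD_eq (l : Fin (m+1) → ℚ) :
    l + rhoD m = (l 0 + 1 - m) • eps m 0 + (l - l 0 • eps m 0 + rhooD m) := by
  funext k
  by_cases hk : k = 0
  · subst hk
    simp [rhoD, rhooD, eps_zero_apply]
    ring
  · simp [rhoD, rhooD, eps_zero_apply, hk]

lemma sub_smul_eps_zero_add_rhooD_apply_zero (l : Fin (m+1) → ℚ) :
    (l - l 0 • eps m 0 + rhooD m) 0 = 0 := by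
  simp [rhooD, eps_zero_apply]

lemma deltaD_sub_smul_eps_zero (l : Fin (m+1) → ℚ) :
    deltaD m l - deltaD m l 0 • eps m 0 = l - l 0 • eps m 0 := by
  funext k
  by_cases hk : k = 0
  · subst hk
    simp [eps_zero_apply]
  · simp [deltaD, eps_zero_apply, hk]

end AlternatingSum

section Denominators

variable {m : ℕ}

lemma prod_half_odd_roots :
    ∏ i ∈ Icc 1 m,
        ((ee m ((1/2 : ℚ) • (eps m 0 - eps m i)) + ee m (-((1/2 : ℚ) • (eps m 0 - eps m i)))) *
         (ee m ((1/2 : ℚ) • (eps m 0 + eps m i)) + ee m (-((1/2 : ℚ) • (eps m 0 + eps m i))))) =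
      ee m ((m : ℚ) • eps m 0) *
        ∏ i ∈ Icc 1 m, ((1 + ee m (-(eps m 0 - eps m i))) * (1 + ee m (-(eps m 0 + eps m i)))) := by
  have hfactor : ∀ i : ℕ,
      (ee m ((1/2 : ℚ) • (eps m 0 - eps m i)) + ee m (-((1/2 : ℚ) • (eps m 0 - eps m i)))) *
        (ee m ((1/2 : ℚ) • (eps m 0 + eps m i)) + ee m (-((1/2 : ℚ) • (eps m 0 + eps m i)))) =
      ee m (eps m 0) * ((1 + ee m (-(eps m 0 - eps m i))) * (1 + ee m (-(eps m 0 + eps m i)))) := by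
    intro i
    rw [ee_half_add_ee_neg_half, ee_half_add_ee_neg_half, mul_mul_mul_comm, ← ee_add]
    congr 2
    module
  rw [prod_congr rfl fun i _ => hfactor i, prod_mul_distrib, ← ee_sum, sum_const, Nat.card_Icc,
    Nat.add_sub_cancel, ← Nat.cast_smul_eq_nsmul ℚ]

lemma prod_half_even_roots :
    ∏ p ∈ filter (fun p : ℕ × ℕ => p.1 < p.2) (Icc 1 m ×ˢ Icc 1 m),
        ((ee m ((1/2 : ℚ) • (eps m p.1 - eps m p.2)) -
            ee m (-((1/2 : ℚ) • (eps m p.1 - eps m p.2)))) *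
         (ee m ((1/2 : ℚ) • (eps m p.1 + eps m p.2)) -
            ee m (-((1/2 : ℚ) • (eps m p.1 + eps m p.2))))) =
      ee m (rhooD m) *
        ∏ p ∈ filter (fun p : ℕ × ℕ => p.1 < p.2) (Icc 1 m ×ˢ Icc 1 m),
          ((1 - ee m (-(eps m p.1 - eps m p.2))) * (1 - ee m (-(eps m p.1 + eps m p.2)))) := by
  have hfactor : ∀ p : ℕ × ℕ,
      (ee m ((1/2 : ℚ) • (eps m p.1 - eps m p.2)) -
          ee m (-((1/2 : ℚ) • (eps m p.1 - eps m p.2)))) *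
        (ee m ((1/2 : ℚ) • (eps m p.1 + eps m p.2)) -
          ee m (-((1/2 : ℚ) • (eps m p.1 + eps m p.2)))) =
      ee m (eps m p.1) *
        ((1 - ee m (-(eps m p.1 - eps m p.2))) * (1 - ee m (-(eps m p.1 + eps m p.2)))) := by
    intro p
    rw [ee_half_sub_ee_neg_half, ee_half_sub_ee_neg_half, mul_mul_mul_comm, ← ee_add]
    congr 2
    module
  rw [prod_congr rfl fun p _ => hfactor p, prod_mul_distrib, ← ee_sum, sum_eps_fst_eq_rhooD]

lemma prod_even_roots_ne_zero :
    ∏ p ∈ filter (fun p : ℕ × ℕ => p.1 < p.2) (Icc 1 m ×ˢ Icc 1 m),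
      ((1 - ee m (-(eps m p.1 - eps m p.2))) * (1 - ee m (-(eps m p.1 + eps m p.2)))) ≠ 0 := by
  refine prod_ne_zero_iff.mpr fun p hp => ?_
  simp only [mem_filter, mem_product, mem_Icc] at hp
  have hp1 : p.1 ≤ m := hp.1.1.2
  have hp2 : p.2 ≤ m := hp.1.2.2
  exact mul_ne_zero
    (one_sub_ee_ne_zero (neg_ne_zero.mpr (eps_sub_eps_ne_zero hp1 hp2 hp.2.ne)))
    (one_sub_ee_ne_zero (neg_ne_zero.mpr (eps_add_eps_ne_zero hp1 hp2 hp.2.ne)))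

lemma ee_sub_ee_neg (a : Fin (m+1) → ℚ) :
    ee m a - ee m (-a) = ee m a * (1 - ee m (-((2 : ℚ) • a))) := by
  rw [mul_sub, mul_one, ← ee_add]
  congr 2
  module

end Denominators

theorem lemma24_D_general (m : ℕ) (l : Fin (m+1) → ℚ) :
    chMD m l - chMD m (deltaD m l) =
      ((∏ i ∈ Finset.Icc 1 m,
          ((ee m ((1/2 : ℚ) • (eps m 0 - eps m i)) +
              ee m (-((1/2 : ℚ) • (eps m 0 - eps m i)))) *
           (ee m ((1/2 : ℚ) • (eps m 0 + eps m i)) +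
              ee m (-((1/2 : ℚ) • (eps m 0 + eps m i)))))) /
        ((ee m (eps m 0) - ee m (-(eps m 0))) *
          ∏ p ∈ Finset.filter (fun p : ℕ × ℕ => p.1 < p.2)
              (Finset.Icc 1 m ×ˢ Finset.Icc 1 m),
            ((ee m ((1/2 : ℚ) • (eps m p.1 - eps m p.2)) -
                ee m (-((1/2 : ℚ) • (eps m p.1 - eps m p.2)))) *
             (ee m ((1/2 : ℚ) • (eps m p.1 + eps m p.2)) -
                ee m (-((1/2 : ℚ) • (eps m p.1 + eps m p.2))))))) *
      ∑ᶠ w ∈ (WD m : Set (GLQ m)),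
        ((LinearMap.det (LinearEquiv.toLinearMap w) : ℚ) : Km m) *
          ee m (w (l + rhoD m)) := by
  rw [chMD, chMD, deltaD_sub_smul_eps_zero, chLD, prod_half_odd_roots, prod_half_even_roots,
    ee_sub_ee_neg, add_rhoD_eq, finsum_WD_det_mul_ee _ (sub_smul_eps_zero_add_rhooD_apply_zero l),
    finsum_WoD_det_mul_ee _ (rhooD m)]
  have hcoeff₁ : ee m ((m : ℚ) • eps m 0) * ee m ((l 0 + 1 - m) • eps m 0) =
      ee m (eps m 0) * ee m (l 0 • eps m 0) := by
    rw [← ee_add, ← ee_add]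
    congr 1
    module
  have hcoeff₂ : ee m ((m : ℚ) • eps m 0) * ee m ((-(l 0 + 1 - m)) • eps m 0) =
      ee m (eps m 0) * ee m (deltaD m l 0 • eps m 0) := by
    rw [← ee_add, ← ee_add, deltaD, if_pos rfl]
    congr 1
    module
  have h2δ : 1 - ee m (-((2 : ℚ) • eps m 0)) ≠ 0 :=
    one_sub_ee_ne_zero (neg_ne_zero.mpr (smul_eps_zero_ne_zero two_ne_zero))
  have hδ := ee_ne_zero (eps m 0)
  have hρ := ee_ne_zero (rhooD m)
  have hD := prod_even_roots_ne_zero (m := m)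
  set P := ∏ i ∈ Icc 1 m, ((1 + ee m (-(eps m 0 - eps m i))) * (1 + ee m (-(eps m 0 + eps m i))))
  set N := ∑ᶠ w ∈ (WoD m : Set (GLQ m)), ((LinearMap.det w.toLinearMap : ℚ) : Km m) *
    ee m (w (l - l 0 • eps m 0 + rhooD m) - rhooD m)
  field_simp
  linear_combination P * N * (hcoeff₂ - hcoeff₁)

/-- Lemma 2.4 for `osp(2m|2)`: for `λ ∈ 𝒫` with `λ₀ ≥ m`,
`chM(λ) − chM(λ^δ) = (∏_{α∈Δ₁⁺}(e^{α/2}+e^{−α/2}) / ∏_{α∈Δ₀⁺}(e^{α/2}−e^{−α/2}))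
· Σ_{w∈W} det(w) e^{w(λ+ρ)}`. -/
theorem lemma24_D (m : ℕ) (hm : 2 ≤ m) (l : Fin (m+1) → ℚ)
    (hP : PD m l) (h0 : (m : ℚ) ≤ l 0) :
    chMD m l - chMD m (deltaD m l) =
      ((∏ i ∈ Finset.Icc 1 m,
          ((ee m ((1/2 : ℚ) • (eps m 0 - eps m i)) +
              ee m (-((1/2 : ℚ) • (eps m 0 - eps m i)))) *
           (ee m ((1/2 : ℚ) • (eps m 0 + eps m i)) +
              ee m (-((1/2 : ℚ) • (eps m 0 + eps m i)))))) /
        ((ee m (eps m 0) - ee m (-(eps m 0))) *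
          ∏ p ∈ Finset.filter (fun p : ℕ × ℕ => p.1 < p.2)
              (Finset.Icc 1 m ×ˢ Finset.Icc 1 m),
            ((ee m ((1/2 : ℚ) • (eps m p.1 - eps m p.2)) -
                ee m (-((1/2 : ℚ) • (eps m p.1 - eps m p.2)))) *
             (ee m ((1/2 : ℚ) • (eps m p.1 + eps m p.2)) -
                ee m (-((1/2 : ℚ) • (eps m p.1 + eps m p.2))))))) *
      ∑ᶠ w ∈ (WD m : Set (GLQ m)),
        ((LinearMap.det (LinearEquiv.toLinearMap w) : ℚ) : Km m) *
          ee m (w (l + rhoD m)) :=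
  lemma24_D_general m l
end Coordinates
end
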